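/- arXiv:2604.02067 — 2 statements merged into one kernel-verified Lean document; each statement's English description precedes it below -/
import Mathlib

section
/- Let M be a nonnegative integer. Then the sum over all monic polynomials r ∈ 𝔽_q[t] with deg(r) ≤ M of φ(r)/q^{2·deg(r)} equals 1 + M(q−1)/q. -/
open Polynomial Finset.HasAntidiagonal

/-- Euler's totient function on `𝔽_q[t]`: the number of units of `𝔽_q[t]/(r)`. -/
noncomputable def polyPhi {Fq : Type} [Field Fq] (r : Polynomial Fq) : ℕ :=
  Nat.card (Polynomial Fq ⧸ Ideal.span {r})ˣ

/-! Counting units of `𝔽_q[t]/(r)` by their representatives of degree `< deg r`, the sum of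
`φ(r)` over monic `r` of degree `n` is the number `F n` of reduced proper fractions `a / r`
with `r` monic of degree `n`. Each of the `q^{2n}` proper fractions `a / r` is uniquely
`(g a') / (g r')` with `g = gcd(a, r)` monic and `a' / r'` reduced, so
`q^{2n} = ∑_{k + l = n} q^k F l`. Hence `F 0 = 1` and `F (n + 1) = q^{2n+2} - q^{2n+1}`, and each
degree `n ≥ 1` contributes `(q - 1)/q` to the sum. -/

theorem Ideal.Quotient.isUnit_mk_span_singleton_iff {R : Type*} [CommRing R] {r a : R} :
    IsUnit (Ideal.Quotient.mk (Ideal.span {r}) a) ↔ IsCoprime a r := by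
  constructor
  · intro h
    obtain ⟨b', hb'⟩ := isUnit_iff_exists_inv.mp h
    obtain ⟨b, rfl⟩ := Ideal.Quotient.mk_surjective b'
    rw [← map_mul, ← map_one (Ideal.Quotient.mk _), Ideal.Quotient.eq,
      Ideal.mem_span_singleton'] at hb'
    obtain ⟨c, hc⟩ := hb'
    exact ⟨b, -c, by linear_combination -hc⟩
  · rintro ⟨u, v, huv⟩
    refine IsUnit.of_mul_eq_one (Ideal.Quotient.mk _ u) ?_
    rw [← map_mul, ← map_one (Ideal.Quotient.mk _), Ideal.Quotient.eq,
      Ideal.mem_span_singleton']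
    exact ⟨-v, by linear_combination -huv⟩

theorem Set.Finite.card_setOf_snd_mem_fst_mem {α β : Type*} {s : Set β} (hs : s.Finite)
    {t : β → Set α} (ht : ∀ b ∈ s, (t b).Finite) :
    Nat.card {x : α × β | x.2 ∈ s ∧ x.1 ∈ t x.2} = ∑ᶠ b ∈ s, Nat.card (t b) := by
  have h : {x : α × β | x.2 ∈ s ∧ x.1 ∈ t x.2} = ⋃ b ∈ s, t b ×ˢ {b} := by
    ext ⟨a, b⟩
    simp [and_comm]
  rw [Nat.card_coe_set_eq, h,
    hs.ncard_biUnion fun b hb => (ht b hb).prod (Set.finite_singleton b)]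
  · simp [Set.ncard_prod]
  · intro b _ c _ hbc
    exact Set.disjoint_prod.mpr (Or.inr (Set.disjoint_singleton.mpr hbc))

namespace Polynomial

theorem mul_mem_degreeLT_add_iff {R : Type*} [Semiring R] [NoZeroDivisors R] {g a : R[X]}
    (hg : g ≠ 0) {m : ℕ} : g * a ∈ degreeLT R (g.natDegree + m) ↔ a ∈ degreeLT R m := by
  rw [mem_degreeLT, mem_degreeLT, degree_mul, degree_eq_natDegree hg, Nat.cast_add]
  exact WithBot.add_lt_add_iff_left WithBot.coe_ne_bot

variable {K : Type} [Field K]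

theorem bijective_quotientMk_of_degree_lt {r : K[X]} (hr : r ≠ 0) :
    Function.Bijective fun a : {a : K[X] // a.degree < r.degree} =>
      Ideal.Quotient.mk (Ideal.span {r}) a.1 := by
  constructor
  · rintro ⟨a, ha⟩ ⟨b, hb⟩ hab
    have hdvd : r ∣ a - b := Ideal.mem_span_singleton.mp (Ideal.Quotient.eq.mp hab)
    have hdeg : (a - b).degree < r.degree := (degree_sub_le a b).trans_lt (max_lt ha hb)
    exact Subtype.ext (sub_eq_zero.mp (eq_zero_of_dvd_of_degree_lt hdvd hdeg))
  · intro x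
    obtain ⟨p, rfl⟩ := Ideal.Quotient.mk_surjective x
    refine ⟨⟨p % r, degree_mod_lt p hr⟩, Ideal.Quotient.eq.mpr ?_⟩
    exact Ideal.mem_span_singleton'.mpr
      ⟨-(p / r), by linear_combination -EuclideanDomain.mod_add_div p r⟩

def coprimeResidues (r : K[X]) : Set K[X] :=
  {a | a.degree < r.degree ∧ IsCoprime a r}

theorem polyPhi_eq_card_coprimeResidues {r : K[X]} (hr : r ≠ 0) :
    polyPhi r = Nat.card (coprimeResidues r) := by
  have hmk := bijective_quotientMk_of_degree_lt hr
  refine (Nat.card_eq_of_bijective (fun a : coprimeResidues r =>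
    (Ideal.Quotient.isUnit_mk_span_singleton_iff.mpr a.2.2).unit) ⟨?_, ?_⟩).symm
  · intro a b hab
    have := hmk.1 (a₁ := ⟨a, a.2.1⟩) (a₂ := ⟨b, b.2.1⟩) (congrArg Units.val hab)
    exact Subtype.ext (Subtype.mk.inj this)
  · intro u
    obtain ⟨⟨a, ha⟩, hau : Ideal.Quotient.mk _ a = (u : K[X] ⧸ Ideal.span {r})⟩ := hmk.2 u
    exact ⟨⟨a, ha, Ideal.Quotient.isUnit_mk_span_singleton_iff.mp (hau ▸ u.isUnit)⟩,
      Units.ext hau⟩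

variable (K) in
def monicOfDegree (n : ℕ) : Set K[X] :=
  {r | r.Monic ∧ r.natDegree = n}

variable (K) in
def properFractions (n : ℕ) : Set (K[X] × K[X]) :=
  (degreeLT K n : Set K[X]) ×ˢ monicOfDegree K n

variable (K) in
def reducedFractions (n : ℕ) : Set (K[X] × K[X]) :=
  {x | x ∈ properFractions K n ∧ IsCoprime x.1 x.2}

theorem mul_mem_properFractions {g : K[X]} {x : K[X] × K[X]} {k l : ℕ}
    (hg : g ∈ monicOfDegree K k) (hx : x ∈ properFractions K l) :
    (g * x.1, g * x.2) ∈ properFractions K (k + l) := by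
  obtain ⟨hgm, rfl⟩ := hg
  obtain ⟨ha, hr, rfl⟩ := hx
  exact ⟨(mul_mem_degreeLT_add_iff hgm.ne_zero).mpr ha, hgm.mul hr, hgm.natDegree_mul hr⟩

theorem gcd_mul_mul_of_isCoprime [DecidableEq K] {g a r : K[X]} (hg : g.Monic)
    (h : IsCoprime a r) : gcd (g * a) (g * r) = g := by
  have h1 : gcd a r = 1 := by
    rw [← normalize_gcd, normalize_eq_one]
    exact (gcd_isUnit_iff a r).mpr h
  rw [gcd_mul_left, h1, mul_one, hg.normalize_eq_self]

noncomputable def mulReduced (n : ℕ)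
    (y : Σ p : antidiagonal n, monicOfDegree K p.1.1 × reducedFractions K p.1.2) :
    properFractions K n :=
  ⟨(y.2.1 * y.2.2.1.1, y.2.1 * y.2.2.1.2),
    by simpa [mem_antidiagonal.mp y.1.2] using mul_mem_properFractions y.2.1.2 y.2.2.2.1⟩

theorem mulReduced_injective (n : ℕ) : Function.Injective (mulReduced (K := K) n) := by
  classical
  rintro ⟨p, g, x⟩ ⟨p', g', x'⟩ h
  have ha : g.1 * x.1.1 = g'.1 * x'.1.1 := congrArg (fun y => y.1.1) h
  have hr : g.1 * x.1.2 = g'.1 * x'.1.2 := congrArg (fun y => y.1.2) h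
  have hg : g.1 = g'.1 := by
    rw [← gcd_mul_mul_of_isCoprime g.2.1 x.2.2, ha, hr,
      gcd_mul_mul_of_isCoprime g'.2.1 x'.2.2]
  obtain rfl : p = p' := by
    have hk : p.1.1 = p'.1.1 := by rw [← g.2.2, ← g'.2.2, hg]
    have := mem_antidiagonal.mp p.2
    have := mem_antidiagonal.mp p'.2
    exact Subtype.ext (Prod.ext hk (by omega))
  obtain rfl : g = g' := Subtype.ext hg
  obtain rfl : x = x' := Subtype.ext (Prod.ext (mul_left_cancel₀ g.2.1.ne_zero ha)
    (mul_left_cancel₀ g.2.1.ne_zero hr))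
  rfl

theorem mulReduced_surjective (n : ℕ) : Function.Surjective (mulReduced (K := K) n) := by
  classical
  rintro ⟨⟨a, r⟩, ha, hr, rfl⟩
  set g := gcd a r
  have hg0 : g ≠ 0 := gcd_ne_zero_of_right hr.ne_zero
  have hg : g.Monic := by simpa [g, normalize_gcd] using monic_normalize hg0
  have ha' : g * (a / g) = a := EuclideanDomain.mul_div_cancel' hg0 (gcd_dvd_left a r)
  have hr' : g * (r / g) = r := EuclideanDomain.mul_div_cancel' hg0 (gcd_dvd_right a r)
  have hrm : (r / g).Monic := hg.of_mul_monic_left (hr'.symm ▸ hr)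
  have hdeg : g.natDegree + (r / g).natDegree = r.natDegree := by
    rw [← hg.natDegree_mul hrm, hr']
  refine ⟨⟨⟨(g.natDegree, (r / g).natDegree), mem_antidiagonal.mpr hdeg⟩, ⟨g, hg, rfl⟩,
    ⟨(a / g, r / g), ⟨?_, hrm, rfl⟩, isCoprime_div_gcd_div_gcd hr.ne_zero⟩⟩,
    Subtype.ext (Prod.ext ha' hr')⟩
  rw [SetLike.mem_coe, ← mul_mem_degreeLT_add_iff hg0, ha', hdeg]
  exact ha

section Card

variable [Fintype K]

instance (n : ℕ) : Finite (degreeLT K n : Set K[X]) :=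
  .of_equiv _ (degreeLTEquiv K n).toEquiv.symm

instance (n : ℕ) : Finite (monicOfDegree K n) :=
  .of_equiv _ ((monicEquivDegreeLT n).trans (degreeLTEquiv K n).toEquiv).symm

instance (n : ℕ) : Finite (properFractions K n) := by
  unfold properFractions; infer_instance

instance (n : ℕ) : Finite (reducedFractions K n) :=
  Finite.Set.subset _ fun _ hx => hx.1

theorem card_degreeLT (n : ℕ) : Nat.card (degreeLT K n) = Fintype.card K ^ n := by
  rw [Nat.card_congr (degreeLTEquiv K n).toEquiv, Nat.card_fun, Nat.card_fin,
    Nat.card_eq_fintype_card]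

theorem card_monicOfDegree (n : ℕ) : Nat.card (monicOfDegree K n) = Fintype.card K ^ n :=
  (Nat.card_congr (monicEquivDegreeLT n)).trans (card_degreeLT n)

theorem card_properFractions (n : ℕ) :
    Nat.card (properFractions K n) = Fintype.card K ^ n * Fintype.card K ^ n := by
  rw [properFractions, Nat.card_congr (Equiv.Set.prod _ _), Nat.card_prod,
    SetLike.coe_sort_coe, card_degreeLT, card_monicOfDegree]

theorem finsum_polyPhi_monicOfDegree (n : ℕ) :
    ∑ᶠ r ∈ monicOfDegree K n, polyPhi r = Nat.card (reducedFractions K n) := by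
  have hset : reducedFractions K n =
      {x | x.2 ∈ monicOfDegree K n ∧ x.1 ∈ coprimeResidues x.2} := by
    ext ⟨a, r⟩
    simp only [reducedFractions, properFractions, monicOfDegree, coprimeResidues,
      Set.mem_ofPred_eq, Set.mem_prod, SetLike.mem_coe, mem_degreeLT]
    constructor
    · rintro ⟨⟨ha, hr, rfl⟩, hcop⟩
      exact ⟨⟨hr, rfl⟩, by rwa [degree_eq_natDegree hr.ne_zero], hcop⟩
    · rintro ⟨⟨hr, rfl⟩, ha, hcop⟩
      exact ⟨⟨by rwa [← degree_eq_natDegree hr.ne_zero], hr, rfl⟩, hcop⟩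
  rw [hset, (Set.toFinite _).card_setOf_snd_mem_fst_mem]
  · exact finsum_mem_congr rfl fun r hr => polyPhi_eq_card_coprimeResidues hr.1.ne_zero
  · rintro r ⟨hr, rfl⟩
    refine (Set.toFinite (degreeLT K r.natDegree : Set K[X])).subset fun a ha => ?_
    rw [SetLike.mem_coe, mem_degreeLT, ← degree_eq_natDegree hr.ne_zero]
    exact ha.1

theorem sum_antidiagonal_pow_mul_card_reducedFractions (n : ℕ) :
    ∑ p ∈ antidiagonal n, Fintype.card K ^ p.1 * Nat.card (reducedFractions K p.2) =
      Fintype.card K ^ n * Fintype.card K ^ n := by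
  rw [← card_properFractions, ← Nat.card_eq_of_bijective _
    ⟨mulReduced_injective n, mulReduced_surjective n⟩, Nat.card_sigma, ← Finset.sum_coe_sort]
  simp only [Nat.card_prod, card_monicOfDegree]

theorem card_reducedFractions_zero : Nat.card (reducedFractions K 0) = 1 := by
  simpa using sum_antidiagonal_pow_mul_card_reducedFractions (K := K) 0

theorem card_reducedFractions_succ (n : ℕ) :
    Nat.card (reducedFractions K (n + 1)) + Fintype.card K ^ (2 * n + 1) =
      Fintype.card K ^ (2 * (n + 1)) := by
  have h := sum_antidiagonal_pow_mul_card_reducedFractions (K := K) (n + 1)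
  rw [Finset.Nat.sum_antidiagonal_succ] at h
  simp only [pow_zero, one_mul, pow_succ', mul_assoc, ← Finset.mul_sum,
    sum_antidiagonal_pow_mul_card_reducedFractions] at h
  convert h using 2 <;> ring

theorem finsum_polyPhi_div_pow_monicOfDegree (n : ℕ) :
    ∑ᶠ r ∈ monicOfDegree K n, (polyPhi r : ℚ) / (Fintype.card K : ℚ) ^ (2 * r.natDegree) =
      Nat.card (reducedFractions K n) / (Fintype.card K : ℚ) ^ (2 * n) := by
  rw [← finsum_polyPhi_monicOfDegree, Nat.cast_finsum_mem (Set.toFinite _), div_eq_mul_inv,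
    finsum_mem_mul]
  exact finsum_mem_congr rfl fun r hr => by rw [hr.2, div_eq_mul_inv]

end Card

theorem setOf_monic_natDegree_le_eq_biUnion (M : ℕ) :
    {r : K[X] | r.Monic ∧ r.natDegree ≤ M} =
      ⋃ n ∈ (Finset.range (M + 1) : Set ℕ), monicOfDegree K n := by
  ext r
  simp [monicOfDegree]

theorem pairwiseDisjoint_monicOfDegree (s : Set ℕ) : s.PairwiseDisjoint (monicOfDegree K) :=
  fun _ _ _ _ hmn => Set.disjoint_left.mpr fun _ hm hn => hmn (hm.2.symm.trans hn.2)

end Polynomial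

/-- For `M ≥ 0`, the sum over monic `r` with `deg r ≤ M` of `φ(r)/q^{2·deg r}`
equals `1 + M(q-1)/q`. -/
theorem phi_sum_c_two (Fq : Type) [Field Fq] [Fintype Fq] (M : ℕ) :
    ∑ᶠ r ∈ {r : Polynomial Fq | r.Monic ∧ r.natDegree ≤ M},
        (polyPhi r : ℚ) / (Fintype.card Fq : ℚ) ^ (2 * r.natDegree) =
      1 + M * ((Fintype.card Fq : ℚ) - 1) / (Fintype.card Fq : ℚ) := by
  have hq : (Fintype.card Fq : ℚ) ≠ 0 := by positivity
  have hsucc (n : ℕ) : (Nat.card (reducedFractions Fq (n + 1)) : ℚ) /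
      (Fintype.card Fq : ℚ) ^ (2 * (n + 1)) = (Fintype.card Fq - 1) / Fintype.card Fq := by
    have h : (Nat.card (reducedFractions Fq (n + 1)) : ℚ) +
        (Fintype.card Fq : ℚ) ^ (2 * n + 1) = (Fintype.card Fq : ℚ) ^ (2 * (n + 1)) := by
      exact_mod_cast card_reducedFractions_succ n
    rw [eq_sub_of_add_eq h]
    field_simp
    ring
  rw [setOf_monic_natDegree_le_eq_biUnion, finsum_mem_biUnion (pairwiseDisjoint_monicOfDegree _)
    (Finset.finite_toSet _) fun n _ => Set.toFinite _, finsum_mem_coe_finset,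
    Finset.sum_range_succ']
  simp only [finsum_polyPhi_div_pow_monicOfDegree, hsucc, card_reducedFractions_zero,
    Finset.sum_const, Finset.card_range, nsmul_eq_mul]
  field_simp
  ring
end

section
/- Let q be a prime power, f a quadratic form over 𝔽_q in n variables, N(P) the number of x ∈ 𝔽_q[t]^n with deg(x_i) < P and f(x) = 0, and Ñ(P) = (1/(q−1))·#{x primitive, deg(x_i) < P, f(x) = 0} where primitive means gcd(x_1,…,x_n) = 1. Then Ñ(P) = (N(P) − q·N(P−1))/(q−1) + 1 for all P ≥ 1. -/
open Polynomial

/-- `N(P)`: the number of zeros `x ∈ 𝔽_q[t]^n` with all `deg x_i < P` of the quadratic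
form `f(x) = Σ_{i,j} A_{ij} x_i x_j` given by the matrix `A`. -/
noncomputable def quadCount {Fq : Type} [Field Fq] {n : ℕ}
    (A : Matrix (Fin n) (Fin n) Fq) (P : ℕ) : ℕ :=
  Nat.card {x : Fin n → Polynomial Fq //
    (∀ i, (x i).degree < (P : WithBot ℕ)) ∧
      ∑ i, ∑ j, Polynomial.C (A i j) * x i * x j = 0}

/-- The number of primitive zeros (i.e. with `gcd(x_1,…,x_n) = 1`) `x ∈ 𝔽_q[t]^n`
with all `deg x_i < P` of the quadratic form given by `A`. -/
noncomputable def quadCountPrim {Fq : Type} [Field Fq] {n : ℕ}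
    (A : Matrix (Fin n) (Fin n) Fq) (P : ℕ) : ℕ :=
  Nat.card {x : Fin n → Polynomial Fq //
    (∀ i, (x i).degree < (P : WithBot ℕ)) ∧
      ∑ i, ∑ j, Polynomial.C (A i j) * x i * x j = 0 ∧
      ∀ d : Polynomial Fq, (∀ i, d ∣ x i) → IsUnit d}

/-!
Every nonzero vector `x ∈ 𝔽_q[t]^n` factors uniquely as `x = g • z` with `g` monic and `z`
primitive, and the zero set of a quadratic form is stable under such scalings. A zero `x` of
degree `< P + 1` that is nonzero and not primitive has such a factor `g` of positive degree;
writing `g = g' t + a` with `a ∈ 𝔽_q` and `g'` monic, `x ↦ (a, g' • z)` is a bijection onto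
`𝔽_q × {nonzero zeros of degree < P}`. Hence
`N(P + 1) = #primitive + q (N(P) - 1) + 1`, where the final `1` counts the zero vector.
-/

open Finset

section PrimitiveVector

variable {R ι : Type*}

def IsPrimitiveVector [CommMonoid R] (x : ι → R) : Prop :=
  ∀ d : R, (∀ i, d ∣ x i) → IsUnit d

theorem IsPrimitiveVector.smul_iff [CommMonoid R] {g : R} {z : ι → R}
    (hz : IsPrimitiveVector z) : IsPrimitiveVector (g • z) ↔ IsUnit g :=
  ⟨fun h => h g fun i => dvd_mul_right g (z i),
    fun hg d hd => hz d fun i => hg.dvd_mul_left.mp (hd i)⟩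

theorem IsPrimitiveVector.ne_zero [CommMonoidWithZero R] [Nontrivial R] {z : ι → R}
    (hz : IsPrimitiveVector z) : z ≠ 0 := fun h =>
  not_isUnit_zero (hz 0 fun i => by simp [h])

variable [CommMonoidWithZero R] [StrongNormalizedGCDMonoid R] [Fintype ι] {g g' : R}
  {x z z' : ι → R}

theorem isPrimitiveVector_iff_gcd_eq_one : IsPrimitiveVector x ↔ univ.gcd x = 1 := by
  refine ⟨fun h => ?_, fun h d hd => isUnit_of_dvd_one (h ▸ dvd_gcd fun i _ => hd i)⟩
  rw [← Finset.normalize_gcd, normalize_eq_one]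
  exact h _ fun i => gcd_dvd (mem_univ i)

theorem IsPrimitiveVector.gcd_smul (hz : IsPrimitiveVector z) (hg : normalize g = g) :
    univ.gcd (g • z) = g := by
  rw [show g • z = fun i => g * z i from rfl, Finset.gcd_mul_left, hg,
    isPrimitiveVector_iff_gcd_eq_one.mp hz, mul_one]

theorem IsPrimitiveVector.eq_of_smul_eq_smul (hz : IsPrimitiveVector z)
    (hz' : IsPrimitiveVector z') (hg : normalize g = g) (hg' : normalize g' = g') (hg0 : g ≠ 0)
    (h : g • z = g' • z') : g = g' ∧ z = z' := by
  obtain rfl : g = g' := by rw [← hz.gcd_smul hg, h, hz'.gcd_smul hg']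
  exact ⟨rfl, funext fun i => mul_left_cancel₀ hg0 (congrFun h i)⟩

theorem exists_isPrimitiveVector_eq_gcd_smul (hx : x ≠ 0) :
    ∃ z, IsPrimitiveVector z ∧ x = univ.gcd x • z := by
  obtain ⟨i, -⟩ := Function.ne_iff.mp hx
  obtain ⟨z, hxz, hz⟩ := extract_gcd x ⟨i, mem_univ i⟩
  exact ⟨z, isPrimitiveVector_iff_gcd_eq_one.mpr hz, funext fun j => hxz j (mem_univ j)⟩

end PrimitiveVector

namespace Polynomial

section Semiring

variable {R : Type*} [Semiring R] {g p : R[X]}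

theorem Monic.divX (hp : p.Monic) (hdeg : p.natDegree ≠ 0) : p.divX.Monic := by
  unfold Monic Polynomial.leadingCoeff
  rw [natDegree_divX_eq_natDegree_tsub_one, coeff_divX, Nat.sub_add_cancel (by omega)]
  exact hp

variable [Nontrivial R]

theorem Monic.mul_X_add_C (hg : g.Monic) (a : R) : (g * X + C a).Monic :=
  (hg.mul monic_X).add_of_left <| degree_C_le.trans_lt <| by
    rw [degree_mul_X, degree_eq_natDegree hg.ne_zero]
    exact_mod_cast Nat.succ_pos _

theorem natDegree_mul_X_add_C (hg : g ≠ 0) (a : R) :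
    (g * X + C a).natDegree = g.natDegree + 1 := by
  rw [natDegree_add_C, natDegree_mul_X hg]

theorem degree_mul_X_add_C_mul_lt_succ_iff [NoZeroDivisors R] (hg : g ≠ 0) (a : R) (z : R[X])
    (P : ℕ) : ((g * X + C a) * z).degree < ↑(P + 1) ↔ (g * z).degree < P := by
  rcases eq_or_ne z 0 with rfl | hz
  · simp
  have hG : g * X + C a ≠ 0 :=
    ne_zero_of_natDegree_gt (n := 0) (by rw [natDegree_mul_X_add_C hg]; omega)
  rw [← natDegree_lt_iff_degree_lt (mul_ne_zero hG hz),
    ← natDegree_lt_iff_degree_lt (mul_ne_zero hg hz), natDegree_mul hG hz,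
    natDegree_mul hg hz, natDegree_mul_X_add_C hg]
  omega

end Semiring

theorem mul_X_add_C_injective {R : Type*} [Ring R] :
    Function.Injective fun p : R × R[X] => p.2 * X + C p.1 := by
  rintro ⟨a, g⟩ ⟨a', g'⟩ h
  obtain rfl : a = a' := by simpa using congrArg (coeff · 0) h
  exact Prod.ext rfl (isRegular_X.right (add_right_cancel h))

end Polynomial

section Counting

variable {K ι : Type*} [Field K]

def vecDegreeLT (P : ℕ) : Set (ι → K[X]) := {x | ∀ i, (x i).degree < P}

def IsScaleInvariant (S : Set (ι → K[X])) : Prop :=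
  ∀ g : K[X], g ≠ 0 → ∀ z, g • z ∈ S ↔ z ∈ S

def monicPrimitiveFactors (U : Set (ι → K[X])) : Set (K[X] × (ι → K[X])) :=
  {p | p.1.Monic ∧ IsPrimitiveVector p.2 ∧ p.1 • p.2 ∈ U}

theorem monicPrimitiveFactors_diff_isPrimitiveVector {S : Set (ι → K[X])}
    (hS : IsScaleInvariant S) (P : ℕ) :
    monicPrimitiveFactors ((vecDegreeLT (P + 1) ∩ S) \ {x | IsPrimitiveVector x}) =
      (fun p : K × K[X] × (ι → K[X]) => (p.2.1 * X + C p.1, p.2.2)) ''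
        (Set.univ ×ˢ monicPrimitiveFactors (vecDegreeLT P ∩ S)) := by
  ext ⟨G, z⟩
  constructor
  · rintro ⟨hG, hz, ⟨hdeg, hGz⟩, hnp⟩
    have hG0 : G.natDegree ≠ 0 := fun h =>
      hnp (hz.smul_iff.mpr (hG.isUnit_iff.mpr (hG.natDegree_eq_zero.mp h)))
    have hg := hG.divX hG0
    have hGg : G.divX * X + C (G.coeff 0) = G := divX_mul_X_add G
    refine ⟨(G.coeff 0, G.divX, z), ⟨trivial, hg, hz, fun i => ?_, ?_⟩, by simp only [hGg]⟩
    · exact (degree_mul_X_add_C_mul_lt_succ_iff hg.ne_zero _ _ _).mp (hGg ▸ hdeg i)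
    · exact (hS _ hg.ne_zero z).mpr ((hS G hG.ne_zero z).mp hGz)
  · rintro ⟨⟨a, g, z⟩, ⟨-, hg, hz, hdeg, hgz⟩, h⟩
    obtain ⟨rfl, rfl⟩ := Prod.mk.inj h
    refine ⟨hg.mul_X_add_C a, hz, ⟨fun i => ?_, ?_⟩, fun hp => ?_⟩
    · exact (degree_mul_X_add_C_mul_lt_succ_iff hg.ne_zero _ _ _).mpr (hdeg i)
    · exact (hS _ (hg.mul_X_add_C a).ne_zero z).mpr ((hS g hg.ne_zero z).mp hgz)
    · have hG1 := (hg.mul_X_add_C a).isUnit_iff.mp (hz.smul_iff.mp hp)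
      have hdeg := natDegree_mul_X_add_C hg.ne_zero a
      rw [hG1, natDegree_one] at hdeg
      omega

variable [Fintype ι]

theorem exists_monic_isPrimitiveVector_smul_eq {x : ι → K[X]} (hx : x ≠ 0) :
    ∃ (g : K[X]) (z : ι → K[X]), g.Monic ∧ IsPrimitiveVector z ∧ g • z = x := by
  classical
  obtain ⟨z, hz, hxz⟩ := exists_isPrimitiveVector_eq_gcd_smul hx
  refine ⟨_, z, ?_, hz, hxz.symm⟩
  rw [← Finset.normalize_gcd]
  exact monic_normalize fun h => hx (by rw [hxz, h, zero_smul])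

theorem injOn_smul_monic_isPrimitiveVector :
    Set.InjOn (fun p : K[X] × (ι → K[X]) => p.1 • p.2)
      {p | p.1.Monic ∧ IsPrimitiveVector p.2} := by
  classical
  rintro ⟨g, z⟩ ⟨hg, hz⟩ ⟨g', z'⟩ ⟨hg', hz'⟩ h
  obtain ⟨rfl, rfl⟩ := hz.eq_of_smul_eq_smul hz' hg.normalize_eq_self hg'.normalize_eq_self
    hg.ne_zero h
  rfl

theorem ncard_monicPrimitiveFactors (U : Set (ι → K[X])) :
    (monicPrimitiveFactors U).ncard = (U \ {0}).ncard := by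
  have himage : (fun p : K[X] × (ι → K[X]) => p.1 • p.2) '' monicPrimitiveFactors U =
      U \ {0} := by
    ext x
    constructor
    · rintro ⟨⟨g, z⟩, ⟨hg, hz, hxU⟩, rfl⟩
      exact ⟨hxU, smul_ne_zero hg.ne_zero hz.ne_zero⟩
    · rintro ⟨hxU, hx : x ≠ 0⟩
      obtain ⟨g, z, hg, hz, rfl⟩ := exists_monic_isPrimitiveVector_smul_eq hx
      exact ⟨(g, z), ⟨hg, hz, hxU⟩, rfl⟩
  rw [← himage, Set.InjOn.ncard_image]
  refine injOn_smul_monic_isPrimitiveVector.mono ?_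
  exact fun _ hp => ⟨hp.1, hp.2.1⟩

theorem ncard_diff_isPrimitiveVector_diff_zero {S : Set (ι → K[X])} (hS : IsScaleInvariant S)
    (P : ℕ) :
    (((vecDegreeLT (P + 1) ∩ S) \ {x | IsPrimitiveVector x}) \ {0}).ncard =
      Nat.card K * ((vecDegreeLT P ∩ S) \ {0}).ncard := by
  rw [← ncard_monicPrimitiveFactors, ← ncard_monicPrimitiveFactors,
    monicPrimitiveFactors_diff_isPrimitiveVector hS, Set.ncard_image_of_injective,
    Set.ncard_prod, Set.ncard_univ]
  rintro ⟨a, g, z⟩ ⟨a', g', z'⟩ h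
  obtain ⟨hG, rfl⟩ := Prod.mk.inj h
  obtain ⟨rfl, rfl⟩ := Prod.mk.inj (mul_X_add_C_injective hG)
  rfl

theorem finite_vecDegreeLT [Finite K] (P : ℕ) : (vecDegreeLT P : Set (ι → K[X])).Finite := by
  have : Finite (degreeLT K P) := .of_equiv _ (degreeLTEquiv K P).toEquiv.symm
  convert Set.Finite.pi (t := fun _ : ι => (degreeLT K P : Set K[X])) fun _ => Set.toFinite _
  ext x
  simp [vecDegreeLT, mem_degreeLT]

theorem ncard_vecDegreeLT_succ_inter_add_card [Finite K] {S : Set (ι → K[X])}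
    (hS : IsScaleInvariant S) (hS0 : 0 ∈ S) (P : ℕ) :
    (vecDegreeLT (P + 1) ∩ S).ncard + Nat.card K =
      (vecDegreeLT (P + 1) ∩ S ∩ {x | IsPrimitiveVector x}).ncard +
        Nat.card K * (vecDegreeLT P ∩ S).ncard + 1 := by
  have hfin (P : ℕ) : (vecDegreeLT P ∩ S).Finite := (finite_vecDegreeLT P).inter_of_left S
  have hzero (P : ℕ) : (0 : ι → K[X]) ∈ vecDegreeLT P ∩ S := ⟨fun i => by simp, hS0⟩
  have hsplit := Set.ncard_inter_add_ncard_sdiff_eq_ncard (vecDegreeLT (P + 1) ∩ S)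
    {x | IsPrimitiveVector x} (hfin _)
  have hnonprim := Set.ncard_sdiff_singleton_add_one
    (s := (vecDegreeLT (P + 1) ∩ S) \ {x | IsPrimitiveVector x})
    ⟨hzero _, fun h => IsPrimitiveVector.ne_zero h rfl⟩ (hfin _).sdiff
  have hnonzero := Set.ncard_sdiff_singleton_add_one (hzero P) (hfin P)
  rw [ncard_diff_isPrimitiveVector_diff_zero hS P] at hnonprim
  rw [← hsplit, ← hnonprim, ← hnonzero]
  ring

end Counting

section QuadraticForm

variable {K ι : Type*} [Field K] [Fintype ι]

def quadZeros (A : Matrix ι ι K) : Set (ι → K[X]) :=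
  {x | ∑ i, ∑ j, C (A i j) * x i * x j = 0}

theorem isScaleInvariant_quadZeros (A : Matrix ι ι K) : IsScaleInvariant (quadZeros A) := by
  intro g hg z
  have hhom : ∑ i, ∑ j, C (A i j) * (g • z) i * (g • z) j =
      g ^ 2 * ∑ i, ∑ j, C (A i j) * z i * z j := by
    simp only [Pi.smul_apply, smul_eq_mul, Finset.mul_sum]
    exact Finset.sum_congr rfl fun i _ => Finset.sum_congr rfl fun j _ => by ring
  simp only [quadZeros, Set.mem_ofPred_eq, hhom, mul_eq_zero, pow_eq_zero_iff two_ne_zero, hg,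
    false_or]

end QuadraticForm

theorem quadCount_eq_ncard {K : Type} [Field K] {n : ℕ} (A : Matrix (Fin n) (Fin n) K) (P : ℕ) :
    quadCount A P = (vecDegreeLT P ∩ quadZeros A).ncard :=
  Nat.card_coe_set_eq _

theorem quadCountPrim_eq_ncard {K : Type} [Field K] {n : ℕ} (A : Matrix (Fin n) (Fin n) K)
    (P : ℕ) :
    quadCountPrim A P = (vecDegreeLT P ∩ quadZeros A ∩ {x | IsPrimitiveVector x}).ncard := by
  rw [← Nat.card_coe_set_eq]
  exact Nat.card_congr (Equiv.subtypeEquivRight fun _ => and_assoc.symm)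

/-- With `Ñ(P) = (1/(q-1))·#{primitive zeros of degree < P}` and `N(P)` the full count,
one has `Ñ(P) = (N(P) - q·N(P-1))/(q-1) + 1` for all `P ≥ 1`. -/
theorem prim_count_formula (Fq : Type) [Field Fq] [Fintype Fq]
    (n : ℕ) (A : Matrix (Fin n) (Fin n) Fq) (P : ℕ) (hP : 1 ≤ P) :
    (quadCountPrim A P : ℚ) / ((Fintype.card Fq : ℚ) - 1) =
      ((quadCount A P : ℚ) - (Fintype.card Fq : ℚ) * (quadCount A (P - 1) : ℚ)) /
          ((Fintype.card Fq : ℚ) - 1) + 1 := by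
  obtain ⟨Q, rfl⟩ : ∃ Q, P = Q + 1 := ⟨P - 1, by omega⟩
  have hcount : quadCount A (Q + 1) + Fintype.card Fq =
      quadCountPrim A (Q + 1) + Fintype.card Fq * quadCount A Q + 1 := by
    rw [quadCount_eq_ncard, quadCount_eq_ncard, quadCountPrim_eq_ncard,
      ← Nat.card_eq_fintype_card]
    exact ncard_vecDegreeLT_succ_inter_add_card (isScaleInvariant_quadZeros A)
      (by simp [quadZeros]) Q
  have hq : (Fintype.card Fq : ℚ) - 1 ≠ 0 :=
    sub_ne_zero.mpr (by exact_mod_cast Fintype.one_lt_card.ne')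
  rw [Nat.add_sub_cancel, div_add_one hq, div_left_inj' hq]
  have hcountℚ := congrArg (Nat.cast : ℕ → ℚ) hcount
  push_cast at hcountℚ
  linarith
end
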